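/- Let $H$ be a real Hilbert space and $U$ a real Hilbert space, $\alpha > 0$. Suppose $u^*, u_h^* \in U$, $y^*, y_h^*, y^h \in H$, and $p^*, p^h, p_h^*, q \in U$ (interface traces) satisfy: (i) the duality identity $(u_h^* - u^*, q_h)_U = (y_h^* - y^*, y_h^* - y^h)_H$, where $q_h$ denotes the discrete co-state difference trace; (ii) the combined variational inequalities give $\alpha \|u^* - u_h^*\|_U^2 \leq (q_h, u^* - u_h^*)_U + (q - p^*, u^* - u_h^*)_U$. Then $\alpha\|u^*-u_h^*\|_U^2 + \|y^*-y_h^*\|_H^2 \leq \|y^*-y^h\|_H^2 + \frac{1}{\alpha}\|p^* - q\|_U^2$, and hence $\sqrt{\alpha}\|u^*-u_h^*\|_U + \|y^*-y_h^*\|_H \leq \sqrt{2}\|y^*-y^h\|_H + \frac{\sqrt{2}}{\sqrt{\alpha}}\|p^* - q\|_U$. -/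

import Mathlib

theorem abstract_control_error_estimate
    {H U : Type*} [NormedAddCommGroup H] [InnerProductSpace ℝ H]
    [NormedAddCommGroup U] [InnerProductSpace ℝ U]
    (α : ℝ) (hα : 0 < α)
    (ustar uhstar : U) (ystar yhstar yh : H) (pstar q qh : U)
    (hident : (inner ℝ (uhstar - ustar) qh : ℝ) = (inner ℝ (yhstar - ystar) (yhstar - yh) : ℝ))
    (hvi : α * ‖ustar - uhstar‖ ^ 2 ≤
      (inner ℝ qh (ustar - uhstar) : ℝ) + (inner ℝ (q - pstar) (ustar - uhstar) : ℝ)) :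
    α * ‖ustar - uhstar‖ ^ 2 + ‖ystar - yhstar‖ ^ 2 ≤
        ‖ystar - yh‖ ^ 2 + (1 / α) * ‖pstar - q‖ ^ 2 ∧
      Real.sqrt α * ‖ustar - uhstar‖ + ‖ystar - yhstar‖ ≤
        Real.sqrt 2 * ‖ystar - yh‖ + (Real.sqrt 2 / Real.sqrt α) * ‖pstar - q‖ := by
  set E := ‖ustar - uhstar‖ with hE
  set A := ‖ystar - yhstar‖ with hA
  set B := ‖ystar - yh‖ with hB
  set P := ‖pstar - q‖ with hP
  -- polarization
  have hpol : (inner ℝ (yhstar - ystar) (yhstar - yh) : ℝ)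
      = (‖yhstar - ystar‖ ^ 2 + ‖yhstar - yh‖ ^ 2 - ‖ystar - yh‖ ^ 2) / 2 := by
    have h := @norm_sub_sq_real H _ _ (yhstar - ystar) (yhstar - yh)
    have h2 : yhstar - ystar - (yhstar - yh) = -(ystar - yh) := by abel
    rw [h2, norm_neg] at h
    linarith
  have hcomm : (inner ℝ qh (ustar - uhstar) : ℝ) = - (inner ℝ (uhstar - ustar) qh : ℝ) := by
    rw [real_inner_comm]
    have : ustar - uhstar = -(uhstar - ustar) := by abel
    rw [this, inner_neg_left]
  have hAeq : ‖yhstar - ystar‖ = A := by rw [hA, norm_sub_rev]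
  have hC : (0:ℝ) ≤ ‖yhstar - yh‖ ^ 2 := sq_nonneg _
  have hqh : (inner ℝ qh (ustar - uhstar) : ℝ)
      = -((A ^ 2 + ‖yhstar - yh‖ ^ 2 - B ^ 2) / 2) := by
    rw [hcomm, hident, hpol, hAeq]
  -- Cauchy-Schwarz + Young
  have hcs : (inner ℝ (q - pstar) (ustar - uhstar) : ℝ) ≤ P * E := by
    have := real_inner_le_norm (q - pstar) (ustar - uhstar)
    have hnr : ‖q - pstar‖ = P := by rw [hP, norm_sub_rev]
    rw [hnr] at this; exact this
  have hyoung : P * E ≤ P ^ 2 / (2 * α) + α * E ^ 2 / 2 := by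
    have h2 : P * E * (2 * α) ≤ P ^ 2 + α ^ 2 * E ^ 2 := by nlinarith [sq_nonneg (P - α * E)]
    have h3 : P * E ≤ (P ^ 2 + α ^ 2 * E ^ 2) / (2 * α) :=
      (le_div_iff₀ (by positivity)).mpr h2
    have h4 : (P ^ 2 + α ^ 2 * E ^ 2) / (2 * α) = P ^ 2 / (2 * α) + α * E ^ 2 / 2 := by
      field_simp
    linarith [h4 ▸ h3]
  have h1 : α * E ^ 2 + A ^ 2 ≤ B ^ 2 + (1 / α) * P ^ 2 := by
    rw [hqh] at hvi
    have hvi2 : α * E ^ 2 ≤ -((A ^ 2 + ‖yhstar - yh‖ ^ 2 - B ^ 2) / 2)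
        + (P ^ 2 / (2 * α) + α * E ^ 2 / 2) := by linarith
    have hαne : α ≠ 0 := hα.ne'
    have h2 : P ^ 2 / (2 * α) = (1 / α) * P ^ 2 / 2 := by
      rw [mul_comm 2 α, div_mul_eq_div_div, one_div, inv_mul_eq_div]
    rw [h2] at hvi2
    linarith [hvi2]
  refine ⟨h1, ?_⟩
  have hsα : Real.sqrt α ^ 2 = α := Real.sq_sqrt hα.le
  have hs2 : Real.sqrt 2 ^ 2 = 2 := Real.sq_sqrt (by norm_num)
  have hsp : 0 < Real.sqrt α := Real.sqrt_pos.mpr hα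
  have hs2p : 0 < Real.sqrt 2 := Real.sqrt_pos.mpr (by norm_num)
  have hEnn : 0 ≤ E := norm_nonneg _
  have hAnn : 0 ≤ A := norm_nonneg _
  have hBnn : 0 ≤ B := norm_nonneg _
  have hPnn : 0 ≤ P := norm_nonneg _
  have hL : 0 ≤ Real.sqrt α * E + A := by positivity
  have hR : 0 ≤ Real.sqrt 2 * B + (Real.sqrt 2 / Real.sqrt α) * P := by positivity
  have hsq : (Real.sqrt α * E + A) ^ 2
      ≤ (Real.sqrt 2 * B + (Real.sqrt 2 / Real.sqrt α) * P) ^ 2 := by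
    have hRexp : (Real.sqrt 2 * B + (Real.sqrt 2 / Real.sqrt α) * P) ^ 2
        = 2 * B ^ 2 + (2 / α) * P ^ 2
          + 2 * (Real.sqrt 2 * B) * ((Real.sqrt 2 / Real.sqrt α) * P) := by
      rw [add_sq, mul_pow, mul_pow, div_pow, hs2, hsα]; ring
    have hcross : 0 ≤ 2 * (Real.sqrt 2 * B) * ((Real.sqrt 2 / Real.sqrt α) * P) := by
      positivity
    have hLexp : (Real.sqrt α * E + A) ^ 2 ≤ 2 * (α * E ^ 2 + A ^ 2) := by
      nlinarith [sq_nonneg (Real.sqrt α * E - A), hsα]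
    rw [hRexp]
    have h2α : (2 / α) * P ^ 2 = 2 * ((1 / α) * P ^ 2) := by ring
    linarith [h1, hcross, hLexp]
  calc Real.sqrt α * E + A = Real.sqrt ((Real.sqrt α * E + A) ^ 2) := by
        rw [Real.sqrt_sq hL]
    _ ≤ Real.sqrt ((Real.sqrt 2 * B + (Real.sqrt 2 / Real.sqrt α) * P) ^ 2) :=
        Real.sqrt_le_sqrt hsq
    _ = _ := Real.sqrt_sq hR
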